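/- arXiv:1603.05352 — 2 statements merged into one kernel-verified Lean document; each statement's English description precedes it below -/
import Mathlib

section
/- Let K be a number field with class group Cl(Z_K) and Davenport constant D (the smallest positive integer such that every sequence of D elements of Cl(Z_K) has a nonempty subsequence with product the identity). If π is an irreducible element of Z_K and (π) = p₁ ⋯ p_g is the factorization into prime ideals (with multiplicity), then g ≤ D. -/
open NumberField Ideal
open scoped nonZeroDivisors

/-- `D` is the Davenport constant of `G`: the least positive integer such that every
sequence (multiset) of `D` elements of `G` has a nonempty subsequence with product `1`. -/
def IsDavenport (G : Type*) [CommGroup G] (D : ℕ) : Prop :=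
  0 < D ∧
    (∀ s : Multiset G, s.card = D → ∃ t ≤ s, t ≠ 0 ∧ t.prod = 1) ∧
    ∀ d : ℕ, 0 < d → d < D →
      ∃ s : Multiset G, s.card = d ∧ ∀ t ≤ s, t ≠ 0 → t.prod ≠ 1

lemma my_exists_le_card {α : Type*} :
    ∀ (s : Multiset α) (d : ℕ), d ≤ Multiset.card s → ∃ t ≤ s, Multiset.card t = d := by
  intro s
  induction s using Multiset.induction with
  | empty => intro d hd; simp at hd; exact ⟨0, le_refl _, by simp [hd]⟩
  | cons a s ih =>
    intro d hd
    rcases d with _ | d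
    · exact ⟨0, Multiset.zero_le _, rfl⟩
    · obtain ⟨t, ht, htc⟩ := ih d (by simpa using Nat.succ_le_succ_iff.mp (by simpa using hd))
      exact ⟨a ::ₘ t, Multiset.cons_le_cons _ ht, by simp [htc]⟩

lemma my_exists_preimage {α β : Type*} {f : α → β} :
    ∀ (s : Multiset α) (t : Multiset β), t ≤ s.map f → ∃ u ≤ s, u.map f = t := by
  intro s
  induction s using Multiset.induction with
  | empty => intro t ht; simp only [Multiset.map_zero, Multiset.le_zero] at ht
             exact ⟨0, le_refl _, by simp [ht]⟩
  | cons a s ih =>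
    intro t ht
    rw [Multiset.map_cons] at ht
    by_cases h : f a ∈ t
    · obtain ⟨t', rfl⟩ := Multiset.exists_cons_of_mem h
      obtain ⟨u, hu, rfl⟩ := ih t' ((Multiset.cons_le_cons_iff _).1 ht)
      exact ⟨a ::ₘ u, Multiset.cons_le_cons _ hu, by simp⟩
    · obtain ⟨u, hu, rfl⟩ := ih t ((Multiset.le_cons_of_notMem h).1 ht)
      exact ⟨u, le_trans hu (Multiset.le_cons_self _ _), rfl⟩

/-- If `π` is an irreducible element of `𝓞 K` and `(π) = p₁ ⋯ p_g` is a factorization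
into nonzero prime ideals (with multiplicity), then `g ≤ D`, the Davenport constant
of the class group of `K`. -/
theorem irreducible_factorization_card_le_davenport
    (K : Type*) [Field K] [NumberField K] (D : ℕ)
    (hD : IsDavenport (ClassGroup (𝓞 K)) D)
    (π : 𝓞 K) (hπ : Irreducible π)
    (P : Multiset (Ideal (𝓞 K)))
    (hP : ∀ p ∈ P, p.IsPrime ∧ p ≠ ⊥)
    (hprod : P.prod = Ideal.span {π}) :
    Multiset.card P ≤ D := by
  by_contra hlt
  push_neg at hlt
  obtain ⟨S, hSP, hScard⟩ := my_exists_le_card P D (le_of_lt hlt)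
  have hmemP : ∀ p ∈ S, p ∈ P := fun p hp => Multiset.mem_of_le hSP hp
  have hnzd : ∀ p ∈ S, p ∈ (Ideal (𝓞 K))⁰ := fun p hp =>
    mem_nonZeroDivisors_iff_ne_zero.mpr (hP p (hmemP p hp)).2
  set f : {p // p ∈ S} → (Ideal (𝓞 K))⁰ := fun p => ⟨p.1, hnzd p.1 p.2⟩ with hf
  obtain ⟨t, hts, ht0, ht1⟩ :=
    hD.2.1 (S.attach.map (fun p => ClassGroup.mk0 (f p))) (by simp [hScard])
  obtain ⟨u, huS, hut⟩ := my_exists_preimage S.attach t hts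
  set Q : Multiset ((Ideal (𝓞 K))⁰) := u.map f with hQdef
  set Q' : Multiset (Ideal (𝓞 K)) := Q.map Subtype.val with hQ'def
  have hQ'u : Q' = u.map (fun p => p.1) := by
    rw [hQ'def, hQdef, Multiset.map_map]
    apply Multiset.map_congr rfl
    intro p _
    simp [hf]
  have hQ'S : Q' ≤ S := by
    rw [hQ'u]
    have := Multiset.map_le_map (f := fun p : {p // p ∈ S} => p.1) huS
    rwa [Multiset.attach_map_val] at this
  have hQ'P : Q' ≤ P := le_trans hQ'S hSP
  have hQcoe : (Q.prod : Ideal (𝓞 K)) = Q'.prod := by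
    rw [hQ'def]
    exact (Multiset.prod_hom Q ((Ideal (𝓞 K))⁰).subtype).symm
  have h1 : ClassGroup.mk0 Q.prod = 1 := by
    calc ClassGroup.mk0 Q.prod = (Q.map ClassGroup.mk0).prod := (Multiset.prod_hom _ _).symm
      _ = (u.map (fun p => ClassGroup.mk0 (f p))).prod := by rw [hQdef, Multiset.map_map]; rfl
      _ = t.prod := by rw [hut]
      _ = 1 := ht1
  have hprin : Q'.prod.IsPrincipal := by
    rw [← hQcoe]
    exact (ClassGroup.mk0_eq_one_iff Q.prod.2).mp h1
  obtain ⟨α, hα⟩ := hprin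
  obtain ⟨R, hR⟩ := Multiset.le_iff_exists_add.mp hQ'P
  have hsplit : Ideal.span {π} = Q'.prod * R.prod := by
    rw [← hprod, hR, Multiset.prod_add]
  have hαπ : α ∣ π := by
    rw [← Ideal.mem_span_singleton, ← Ideal.submodule_span_eq, ← hα]
    have hle : Ideal.span {π} ≤ Q'.prod := by
      rw [hsplit]; exact Ideal.mul_le_left
    exact hle (Ideal.mem_span_singleton_self π)
  obtain ⟨β, hβ⟩ := hαπ
  have hne_top : ∀ (M : Multiset (Ideal (𝓞 K))), M ≠ 0 → (∀ p ∈ M, p ∈ P) →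
      M.prod ≠ ⊤ := by
    intro M hM0 hMP htop
    obtain ⟨p, hp⟩ := Multiset.exists_mem_of_ne_zero hM0
    have hle : M.prod ≤ p := Ideal.le_of_dvd (Multiset.dvd_prod hp)
    exact (hP p (hMP p hp)).1.ne_top (top_le_iff.mp (htop ▸ hle))
  have hu0 : u ≠ 0 := by
    intro h; apply ht0; rw [← hut, h]; simp
  have hQ'0 : Q' ≠ 0 := by
    rw [hQ'u]; simpa using hu0
  have hQ'mem : ∀ p ∈ Q', p ∈ P := fun p hp => Multiset.mem_of_le hQ'P hp
  rcases hπ.isUnit_or_isUnit hβ with hα1 | hβ1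
  · have htop : Q'.prod = ⊤ := by
      rw [hα, Ideal.submodule_span_eq, Ideal.span_singleton_eq_top.mpr hα1]
    exact hne_top Q' hQ'0 hQ'mem htop
  · have hspan : Ideal.span {π} = Q'.prod := by
      rw [hα, Ideal.submodule_span_eq]
      apply Ideal.span_singleton_eq_span_singleton.mpr
      exact Associated.symm ⟨hβ1.unit, by rw [IsUnit.unit_spec]; exact hβ.symm⟩
    have hQ'ne : Q'.prod ≠ 0 := by
      apply Multiset.prod_ne_zero
      intro h0
      exact (hP 0 (hQ'mem 0 h0)).2 rfl
    have hR1 : R.prod = 1 := by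
      have h := hsplit
      rw [hspan] at h
      nth_rewrite 1 [← mul_one Q'.prod] at h
      exact (mul_left_cancel₀ hQ'ne h).symm
    have hR0 : R ≠ 0 := by
      intro h
      rw [h, add_zero] at hR
      have hcard : Multiset.card P = Multiset.card Q' := by rw [hR]
      have hQ'card : Multiset.card Q' ≤ D := by
        rw [hQ'u]
        simp only [Multiset.card_map]
        have hc : Multiset.card t ≤ D := by
          have hc2 := Multiset.card_le_card hts
          simpa [hScard] using hc2
        rw [← hut] at hc
        simpa using hc
      omega
    have hRmem : ∀ p ∈ R, p ∈ P := fun p hp => by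
      rw [hR]; exact Multiset.mem_add.mpr (Or.inr hp)
    exact hne_top R hR0 hRmem (by rw [hR1]; exact Ideal.one_eq_top)
end

section
/- Let α be a nonzero element of Z_K, h the class number, ω(α) the number of distinct prime ideal divisors of (α), and δ(α) the number of nonassociate divisors of α. Then δ(α) ≥ ∏_{i=1}^{h} Σ_{0 ≤ j ≤ ω_i(α), h ∣ j} C(ω_i(α), j), where ω_i(α) counts distinct prime ideal divisors of (α) in class C_i. -/
open NumberField Ideal UniqueFactorizationMonoid
open scoped Classical

/-- The ideal class of a nonzero ideal of `𝓞 K` (junk value `1` at the zero ideal). -/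
noncomputable def cls {K : Type*} [Field K] [NumberField K] (I : Ideal (𝓞 K)) :
    ClassGroup (𝓞 K) :=
  if h : I = 0 then 1 else ClassGroup.mk0 ⟨I, mem_nonZeroDivisors_of_ne_zero h⟩

/-- `ω_c(I)`: number of distinct prime ideal factors of `I` lying in the class `c`. -/
noncomputable def smallOmega {K : Type*} [Field K] [NumberField K]
    (c : ClassGroup (𝓞 K)) (I : Ideal (𝓞 K)) : ℕ :=
  ((normalizedFactors I).toFinset.filter (fun p => cls p = c)).card

lemma aux_card_powerset_filter_dvd {β : Type*} (n : ℕ) (s : Finset β) :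
    ((s.powerset.filter (fun t => n ∣ t.card)).card =
      ∑ j ∈ Finset.range (s.card + 1), if n ∣ j then s.card.choose j else 0) := by
  rw [Finset.card_eq_sum_card_fiberwise (f := Finset.card) (t := Finset.range (s.card + 1))
      (fun t ht => by
        simp only [Finset.mem_coe, Finset.mem_filter, Finset.mem_powerset] at ht
        exact Finset.mem_range.2 (Nat.lt_succ_of_le (Finset.card_le_card ht.1)))]
  refine Finset.sum_congr rfl fun j _ => ?_
  rw [Finset.filter_filter]
  by_cases hdvd : n ∣ j
  · rw [if_pos hdvd, ← Finset.card_powersetCard, Finset.powersetCard_eq_filter]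
    congr 1
    apply Finset.filter_congr
    intro t _
    constructor
    · rintro ⟨_, e⟩; exact e
    · intro e; exact ⟨e ▸ hdvd, e⟩
  · rw [if_neg hdvd, Finset.card_eq_zero]
    apply Finset.filter_false_of_mem
    rintro t _ ⟨h1, rfl⟩
    exact hdvd h1

lemma cls_one {K : Type*} [Field K] [NumberField K] : cls (1 : Ideal (𝓞 K)) = 1 := by
  rw [cls, dif_neg (one_ne_zero)]
  exact (congrArg _ (Subtype.ext rfl)).trans (map_one ClassGroup.mk0)

set_option maxHeartbeats 1000000 in
set_option synthInstance.maxHeartbeats 200000 in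
lemma cls_mul {K : Type*} [Field K] [NumberField K] (I J : Ideal (𝓞 K))
    (hI : I ≠ 0) (hJ : J ≠ 0) : cls (I * J) = cls I * cls J := by
  rw [cls, cls, cls, dif_neg (mul_ne_zero hI hJ), dif_neg hI, dif_neg hJ]
  have h := MonoidHom.map_mul (ClassGroup.mk0 (R := 𝓞 K))
    ⟨I, mem_nonZeroDivisors_of_ne_zero hI⟩ ⟨J, mem_nonZeroDivisors_of_ne_zero hJ⟩
  rw [← h]
  exact congrArg ClassGroup.mk0 (Subtype.ext rfl)

lemma cls_prod {K : Type*} [Field K] [NumberField K] {ι : Type*} (s : Finset ι)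
    (f : ι → Ideal (𝓞 K)) (hf : ∀ i ∈ s, f i ≠ 0) :
    cls (∏ i ∈ s, f i) = ∏ i ∈ s, cls (f i) := by
  induction s using Finset.cons_induction with
  | empty => simpa using cls_one
  | cons a s ha ih =>
    rw [Finset.prod_cons, Finset.prod_cons,
      cls_mul _ _ (hf a (Finset.mem_cons_self a s))
        (Finset.prod_ne_zero_iff.2 fun i hi => hf i (Finset.mem_cons_of_mem hi)),
      ih fun i hi => hf i (Finset.mem_cons_of_mem hi)]

lemma cls_eq_one_iff {K : Type*} [Field K] [NumberField K] {I : Ideal (𝓞 K)} (hI : I ≠ 0) :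
    cls I = 1 ↔ I.IsPrincipal := by
  rw [cls, dif_neg hI]
  exact ClassGroup.mk0_eq_one_iff _

/-- `δ(α) ≥ ∏_{i=1}^{h} Σ_{0 ≤ j ≤ ω_i(α), h ∣ j} C(ω_i(α), j)`, where `δ(α)` is the
number of nonassociate divisors of `α` (equivalently, principal ideals dividing `(α)`)
and `h` is the class number. -/
theorem count_nonassociate_divisors_ge
    (K : Type*) [Field K] [NumberField K] (α : 𝓞 K) (hα : α ≠ 0) :
    Nat.card {I : Ideal (𝓞 K) // I.IsPrincipal ∧ I ∣ Ideal.span {α}} ≥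
      ∏ c : ClassGroup (𝓞 K),
        ∑ j ∈ Finset.range (smallOmega c (Ideal.span {α}) + 1),
          if Nat.card (ClassGroup (𝓞 K)) ∣ j
            then (smallOmega c (Ideal.span {α})).choose j else 0 := by
  set I₀ := Ideal.span {α} with hI₀def
  have hI₀ : I₀ ≠ 0 := by
    simpa [hI₀def, Ideal.zero_eq_bot, Ideal.span_singleton_eq_bot] using hα
  set n := Nat.card (ClassGroup (𝓞 K)) with hn
  set T : Finset (Ideal (𝓞 K)) := (normalizedFactors I₀).toFinset with hT
  have hTprime : ∀ p ∈ T, Prime p := fun p hp =>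
    prime_of_normalized_factor p (Multiset.mem_toFinset.1 hp)
  have hTdvd : ∀ p ∈ T, p ∣ I₀ := fun p hp =>
    dvd_of_mem_normalizedFactors (Multiset.mem_toFinset.1 hp)
  set Tc : ClassGroup (𝓞 K) → Finset (Ideal (𝓞 K)) :=
    fun c => T.filter (fun p => cls p = c) with hTc
  have hsmall : ∀ c, smallOmega c I₀ = (Tc c).card := fun c => rfl
  set D : ClassGroup (𝓞 K) → Finset (Finset (Ideal (𝓞 K))) :=
    fun c => (Tc c).powerset.filter (fun S => n ∣ S.card) with hD
  have hDsub : ∀ c, ∀ S ∈ D c, S ⊆ Tc c := fun c S hS =>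
    Finset.mem_powerset.1 (Finset.mem_filter.1 hS).1
  have hDdvd : ∀ c, ∀ S ∈ D c, n ∣ S.card := fun c S hS => (Finset.mem_filter.1 hS).2
  -- finiteness of the target
  haveI : Fintype {I : Ideal (𝓞 K) // I ∣ I₀} :=
    UniqueFactorizationMonoid.fintypeSubtypeDvd I₀ hI₀
  haveI : Finite {I : Ideal (𝓞 K) // I.IsPrincipal ∧ I ∣ I₀} :=
    Finite.of_injective (fun x => (⟨x.1, x.2.2⟩ : {I : Ideal (𝓞 K) // I ∣ I₀}))
      (fun a b hab => Subtype.ext (Subtype.mk_eq_mk.mp hab))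
  -- the union of the chosen sets
  set U : (∀ c : ClassGroup (𝓞 K), {S // S ∈ D c}) → Finset (Ideal (𝓞 K)) :=
    fun f => Finset.univ.biUnion (fun c => (f c).1) with hU
  have hUsub : ∀ f, U f ⊆ T := by
    intro f p hp
    obtain ⟨c, _, hc⟩ := Finset.mem_biUnion.1 hp
    exact Finset.filter_subset _ _ (hDsub c _ (f c).2 hc)
  have hUdisj : ∀ f : (∀ c : ClassGroup (𝓞 K), {S // S ∈ D c}),
      Set.PairwiseDisjoint (↑(Finset.univ : Finset (ClassGroup (𝓞 K))))
        (fun c => ((f c).1 : Finset (Ideal (𝓞 K)))) := by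
    intro f c _ c' _ hne
    refine Finset.disjoint_left.2 ?_
    intro p hp hp'
    have h1 : cls p = c := (Finset.mem_filter.1 (hDsub c _ (f c).2 hp)).2
    have h2 : cls p = c' := (Finset.mem_filter.1 (hDsub c' _ (f c').2 hp')).2
    exact hne (h1 ▸ h2)
  have hmem_iff : ∀ f c p, p ∈ (f c).1 ↔ p ∈ U f ∧ cls p = c := by
    intro f c p
    constructor
    · intro hp
      exact ⟨Finset.mem_biUnion.2 ⟨c, Finset.mem_univ c, hp⟩,
        (Finset.mem_filter.1 (hDsub c _ (f c).2 hp)).2⟩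
    · rintro ⟨hp, hc⟩
      obtain ⟨c', _, hc'⟩ := Finset.mem_biUnion.1 hp
      have : cls p = c' := (Finset.mem_filter.1 (hDsub c' _ (f c').2 hc')).2
      obtain rfl : c' = c := this.symm.trans hc
      exact hc'
  -- the map to principal divisors
  have hprincipal : ∀ f, (∏ p ∈ U f, p).IsPrincipal := by
    intro f
    have hne : ∀ p ∈ U f, (p : Ideal (𝓞 K)) ≠ 0 := fun p hp =>
      (hTprime p (hUsub f hp)).ne_zero
    rw [← cls_eq_one_iff (Finset.prod_ne_zero_iff.2 hne)]
    rw [cls_prod _ _ hne, hU]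
    rw [Finset.prod_biUnion (hUdisj f)]
    refine Finset.prod_eq_one fun c _ => ?_
    have hcp : ∀ p ∈ (f c).1, cls p = c := fun p hp =>
      (Finset.mem_filter.1 (hDsub c _ (f c).2 hp)).2
    rw [Finset.prod_congr rfl (fun p hp => hcp p hp), Finset.prod_const]
    obtain ⟨k, hk⟩ := hDdvd c _ (f c).2
    rw [hk, pow_mul, hn, pow_card_eq_one', one_pow]
  have hdvd : ∀ f, (∏ p ∈ U f, p) ∣ I₀ := fun f =>
    Finset.prod_primes_dvd I₀ (fun p hp => hTprime p (hUsub f hp))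
      (fun p hp => hTdvd p (hUsub f hp))
  set F : (∀ c : ClassGroup (𝓞 K), {S // S ∈ D c}) →
      {I : Ideal (𝓞 K) // I.IsPrincipal ∧ I ∣ I₀} :=
    fun f => ⟨∏ p ∈ U f, p, hprincipal f, hdvd f⟩ with hF
  have hFinj : Function.Injective F := by
    intro f f' hff
    have hprod : (∏ p ∈ U f, p) = ∏ p ∈ U f', p := congrArg Subtype.val hff
    have hUU : U f = U f' := by
      have h1 : normalizedFactors ((U f).val.prod) = (U f).val :=
        normalizedFactors_prod_of_prime (fun p hp => hTprime p (hUsub f hp))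
      have h2 : normalizedFactors ((U f').val.prod) = (U f').val :=
        normalizedFactors_prod_of_prime (fun p hp => hTprime p (hUsub f' hp))
      have hv : (U f).val.prod = (U f').val.prod := by
        rw [Finset.prod_val, Finset.prod_val]; exact hprod
      exact Finset.val_injective (by rw [← h1, ← h2, hv])
    funext c
    apply Subtype.ext
    ext p
    rw [hmem_iff f c p, hmem_iff f' c p, hUU]
  have hcard := Nat.card_le_card_of_injective F hFinj
  rw [Nat.card_pi] at hcard
  calc Nat.card {I : Ideal (𝓞 K) // I.IsPrincipal ∧ I ∣ I₀}
      ≥ ∏ c : ClassGroup (𝓞 K), Nat.card {S // S ∈ D c} := hcard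
    _ = ∏ c : ClassGroup (𝓞 K),
        ∑ j ∈ Finset.range (smallOmega c I₀ + 1),
          if n ∣ j then (smallOmega c I₀).choose j else 0 := by
      refine Finset.prod_congr rfl fun c _ => ?_
      rw [Nat.card_eq_finsetCard, hD]
      simp only [hsmall c]
      exact aux_card_powerset_filter_dvd n (Tc c)
end
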